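/- Let G be a finite simple graph with minimum degree k. Then the dominance complex D(G) is (k−2)-connected, i.e., π_i(D(G)) is trivial for all i with 0 ≤ i ≤ k−2. -/

import Mathlib

open SimpleGraph

/-- An abstract simplicial complex on the underlying vertex set `V`. -/
structure Cplx (V : Type) where
  faces : Finset V → Prop
  down_closed : ∀ ⦃σ τ : Finset V⦄, σ ⊆ τ → faces τ → faces σ

/-- The dominance complex of a graph: the faces are the subsets of the vertex set
whose complement is a dominating set. -/
def domCpx {V : Type} [Fintype V] [DecidableEq V] (G : SimpleGraph V) : Cplx V where
  faces σ := ∀ v : V, ∃ w : V, w ∉ σ ∧ (w = v ∨ G.Adj w v)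
  down_closed := by
    intro σ τ hst h v
    obtain ⟨w, hw, h2⟩ := h v
    exact ⟨w, fun hc => hw (hst hc), h2⟩

open Classical in
/-- The geometric realization of a simplicial complex, as a subspace of `V → ℝ`. -/
def Cplx.space {V : Type} [Fintype V] (K : Cplx V) : Type :=
  {f : V → ℝ // (∑ v, f v = 1) ∧ (∀ v, 0 ≤ f v) ∧
    K.faces (Finset.univ.filter fun v => f v ≠ 0)}

instance {V : Type} [Fintype V] (K : Cplx V) : TopologicalSpace K.space :=
  instTopologicalSpaceSubtype

/-!
Every set of at most `k` vertices is a face of `D(G)` (a closed neighbourhood has more than `k`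
vertices), so every non-face has more than `k` vertices.

An open neighbourhood `U` of the realization retracts onto it: subtract from `f` the largest level
`t` such that some non-face lies in `{f ≥ t}`, clip at `0` and normalise; the support is then the
face `{f > t}`. Where this fails, `f` is constant on a non-face, so the complement of `U` lies in
finitely many subspaces of codimension at least `k`.

A loop `γ` of dimension `i ≤ k - 2` is null-homotopic through its cone, an `(i + 1)`-cube, once the
cone is moved off those subspaces rel boundary. Replace it by a smooth approximation (Stone–
Weierstrass) away from the boundary and add a generic multiple of a bump: the bad translations
form a `C¹` image of a space of smaller dimension, hence have Hausdorff dimension too small to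
fill a neighbourhood. Retracting onto the realization gives the null-homotopy.
-/

open Set Function unitInterval Module

noncomputable section

section SmoothApproximation

variable {X E : Type*} [TopologicalSpace X] [NormedAddCommGroup E] [NormedSpace ℝ E]

def contDiffPullback (e : C(X, E)) : Subalgebra ℝ C(X, ℝ) where
  carrier := {g | ∃ G : E → ℝ, ContDiff ℝ 1 G ∧ ⇑g = G ∘ e}
  mul_mem' := by
    rintro _ _ ⟨G, hG, hg⟩ ⟨H, hH, hh⟩
    exact ⟨G * H, hG.mul hH, by rw [ContinuousMap.coe_mul, hg, hh]; rfl⟩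
  add_mem' := by
    rintro _ _ ⟨G, hG, hg⟩ ⟨H, hH, hh⟩
    exact ⟨G + H, hG.add hH, by rw [ContinuousMap.coe_add, hg, hh]; rfl⟩
  algebraMap_mem' c := ⟨fun _ => c, contDiff_const, rfl⟩

theorem contDiffPullback_separatesPoints {e : C(X, E)} (he : Injective e) :
    (contDiffPullback e).SeparatesPoints := by
  intro x y hxy
  obtain ⟨ℓ, hℓ⟩ := SeparatingDual.exists_separating_of_ne (R := ℝ) (he.ne hxy)
  exact ⟨_, ⟨⟨fun z => ℓ (e z), by fun_prop⟩, ⟨ℓ, ℓ.contDiff, rfl⟩, rfl⟩, hℓ⟩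

theorem exists_contDiff_comp_near [CompactSpace X] {e : C(X, E)} (he : Injective e)
    {ι : Type*} [Fintype ι] {f : X → ι → ℝ} (hf : Continuous f) {ε : ℝ} (hε : 0 < ε) :
    ∃ P : E → ι → ℝ, ContDiff ℝ 1 P ∧ ∀ x, dist (P (e x)) (f x) < ε := by
  have hcoord (j : ι) : ∃ G : E → ℝ, ContDiff ℝ 1 G ∧ ∀ x, dist (G (e x)) (f x j) < ε := by
    obtain ⟨⟨g, G, hG, hg⟩, hnear⟩ :=
      ContinuousMap.exists_mem_subalgebra_near_continuous_of_separatesPoints _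
        (contDiffPullback_separatesPoints he) _ ((continuous_apply j).comp hf) ε hε
    refine ⟨G, hG, fun x => ?_⟩
    simpa [hg, dist_eq_norm] using hnear x
  choose G hG hnear using hcoord
  exact ⟨fun y j => G j y, contDiff_pi.2 hG, fun x => (dist_pi_lt_iff hε).2 fun j => hnear j x⟩

end SmoothApproximation

section Genericity

variable {E F : Type*} [NormedAddCommGroup E] [NormedSpace ℝ E] [FiniteDimensional ℝ E]
  [NormedAddCommGroup F] [NormedSpace ℝ F] [FiniteDimensional ℝ F]

/-- The bad `w` are the points `(μ y)⁻¹ • (l - P y)` with `y ∈ Ω` and `l ∈ L j`: a `C¹` image of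
`Ω × L j`, whose Hausdorff dimension is too small for it to contain an open set. -/
theorem exists_forall_add_smul_notMem {ι : Type*} [Countable ι] (L : ι → Submodule ℝ F)
    (hL : ∀ j, finrank ℝ E + finrank ℝ (L j) < finrank ℝ F) {Ω : Set E} (hΩ : Convex ℝ Ω)
    {P : E → F} {μ : E → ℝ} (hP : ContDiffOn ℝ 1 P Ω) (hμ : ContDiffOn ℝ 1 μ Ω)
    (hμ0 : ∀ y ∈ Ω, μ y ≠ 0) : ∃ w : F, ∀ y ∈ Ω, ∀ j, P y + μ y • w ∉ L j := by
  rcases isEmpty_or_nonempty ι with hι | ⟨⟨j₀⟩⟩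
  · exact ⟨0, fun _ _ j => isEmptyElim j⟩
  let bad (j : ι) : E × L j → F := fun z => (μ z.1)⁻¹ • ((z.2 : F) - P z.1)
  have hdim (j : ι) : dimH (bad j '' Ω ×ˢ univ) ≤ (finrank ℝ F - 1 : ℕ) := by
    have hsmooth : ContDiffOn ℝ 1 (bad j) (Ω ×ˢ univ) :=
      ((hμ.comp contDiffOn_fst fun z hz => hz.1).inv fun z hz => hμ0 z.1 hz.1).smul
        (((L j).subtypeL.contDiff.comp contDiff_snd).contDiffOn.sub
          (hP.comp contDiffOn_fst fun z hz => hz.1))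
    calc dimH (bad j '' Ω ×ˢ univ) ≤ dimH (Ω ×ˢ univ : Set (E × L j)) :=
          hsmooth.dimH_image_le (hΩ.prod convex_univ) le_rfl
      _ ≤ finrank ℝ (E × L j) := by
          rw [← Real.dimH_univ_eq_finrank]; exact dimH_mono (subset_univ _)
      _ ≤ (finrank ℝ F - 1 : ℕ) := by
          rw [finrank_prod]; have := hL j; exact_mod_cast (by omega)
  have hsmall : dimH (⋃ j, bad j '' Ω ×ˢ univ) < finrank ℝ F := by
    rw [dimH_iUnion]
    refine (iSup_le hdim).trans_lt ?_
    have := hL j₀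
    exact_mod_cast (by omega)
  obtain ⟨w, hw⟩ := (dense_compl_of_dimH_lt_finrank hsmall).nonempty
  refine ⟨w, fun y hy j hmem => hw (mem_iUnion.2 ⟨j, (y, ⟨_, hmem⟩), ⟨hy, trivial⟩, ?_⟩)⟩
  simp [bad, inv_smul_smul₀ (hμ0 y hy)]

end Genericity

namespace Cube

theorem isClosed_boundary (N : Type*) [Finite N] : IsClosed (boundary N) := by
  have : boundary N = ⋃ j, ({p | p j = 0} ∪ {p | p j = 1}) := by ext; simp [boundary]
  rw [this]
  exact isClosed_iUnion_of_finite fun j => (isClosed_eq (continuous_apply j) continuous_const).union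
    (isClosed_eq (continuous_apply j) continuous_const)

def innerBox (N : Type*) (ρ : ℝ) : Set (N → ℝ) := univ.pi fun _ => Ioo ρ (1 - ρ)

theorem notMem_innerBox_of_mem_boundary {N : Type*} {ρ : ℝ} (hρ : 0 < ρ) {p : N → I}
    (hp : p ∈ boundary N) : (fun j => (p j : ℝ)) ∉ innerBox N ρ := fun h => by
  obtain ⟨j, hj | hj⟩ := hp <;>
  · have := h j trivial
    simp only [hj, Set.mem_Ioo, Set.Icc.coe_zero, Set.Icc.coe_one] at this
    linarith [this.1, this.2]

variable {N : Type*} [Fintype N]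

theorem exists_pos_collar_subset {W : Set (N → I)} (hW : IsOpen W) (hbdry : boundary N ⊆ W) :
    ∃ ρ > 0, ∀ p : N → I, (fun j => (p j : ℝ)) ∉ innerBox N ρ → p ∈ W := by
  let b (p : N → I) : ℝ := ∏ j, (p j : ℝ) * (1 - p j)
  have hfactor (p : N → I) (j : N) : 0 ≤ (p j : ℝ) * (1 - p j) ∧ (p j : ℝ) * (1 - p j) ≤ 1 :=
    ⟨mul_nonneg (p j).2.1 (by linarith [(p j).2.2]), by nlinarith [(p j).2.1, (p j).2.2]⟩
  have hb_pos (p : N → I) (hp : p ∉ W) : 0 < b p := by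
    refine Finset.prod_pos fun j _ => ?_
    have hj : p j ≠ 0 ∧ p j ≠ 1 := not_or.1 fun h => hp (hbdry ⟨j, h⟩)
    have h0 : (p j : ℝ) ≠ 0 := fun h => hj.1 (Subtype.ext h)
    have h1 : (p j : ℝ) ≠ 1 := fun h => hj.2 (Subtype.ext h)
    exact mul_pos ((p j).2.1.lt_of_ne' h0) (sub_pos.2 ((p j).2.2.lt_of_ne h1))
  obtain ⟨ρ, hρ, hρb⟩ := hW.isClosed_compl.isCompact.exists_forall_le'
    (by fun_prop : Continuous b).continuousOn hb_pos
  refine ⟨ρ / 2, by positivity, fun p hp => ?_⟩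
  classical
  obtain ⟨j, -, hj⟩ := not_forall₂.1 hp
  by_contra hpW
  have hb_le : b p ≤ (p j : ℝ) * (1 - p j) := by
    rw [show b p = _ from (Finset.mul_prod_erase _ _ (Finset.mem_univ j)).symm]
    exact mul_le_of_le_one_right (hfactor p j).1
      (Finset.prod_le_one (fun i _ => (hfactor p i).1) fun i _ => (hfactor p i).2)
  have := hρb p hpW
  have := (p j).2.1
  have := (p j).2.2
  rcases not_and_or.1 hj with hj | hj <;> nlinarith [not_lt.1 hj]

theorem exists_pos_collar_ball_subset {F : Type*} [PseudoMetricSpace F] {U : Set F}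
    (hU : IsOpen U) {f : (N → I) → F} (hf : Continuous f) (hfU : ∀ p ∈ boundary N, f p ∈ U) :
    ∃ δ > 0, ∃ ρ > 0, ∀ p : N → I, (fun j => (p j : ℝ)) ∉ innerBox N ρ →
      Metric.ball (f p) δ ⊆ U := by
  obtain ⟨δ, hδ, hδU⟩ := ((isClosed_boundary N).isCompact.image hf).exists_thickening_subset_open
    hU (image_subset_iff.2 hfU)
  obtain ⟨ρ, hρ, hcollar⟩ := exists_pos_collar_subset
    ((Metric.isOpen_thickening (δ := δ / 2)).preimage hf)
    fun p hp => Metric.self_subset_thickening (half_pos hδ) _ (mem_image_of_mem f hp)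
  refine ⟨δ / 2, half_pos hδ, ρ, hρ, fun p hp z hz => hδU ?_⟩
  obtain ⟨q, hq, hfq⟩ := Metric.mem_thickening_iff.1 (hcollar p hp)
  exact Metric.mem_thickening_iff.2 ⟨q, hq, by
    linarith [dist_triangle z (f p) q, Metric.mem_ball.1 hz]⟩

def cutoff (ρ : ℝ) (p : N → I) : ℝ := ∏ j, min 1 (min (p j : ℝ) (1 - p j) / ρ)

theorem continuous_cutoff (ρ : ℝ) : Continuous (cutoff (N := N) ρ) := by
  unfold cutoff; fun_prop

theorem cutoff_mem_Icc {ρ : ℝ} (hρ : 0 < ρ) (p : N → I) : cutoff ρ p ∈ Icc 0 1 := by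
  have hfactor (j : N) : 0 ≤ min 1 (min (p j : ℝ) (1 - p j) / ρ) :=
    le_min zero_le_one (div_nonneg (le_min (p j).2.1 (sub_nonneg.2 (p j).2.2)) hρ.le)
  exact ⟨Finset.prod_nonneg fun j _ => hfactor j,
    Finset.prod_le_one (fun j _ => hfactor j) fun _ _ => min_le_left _ _⟩

theorem cutoff_eq_zero {ρ : ℝ} {p : N → I} (hp : p ∈ boundary N) : cutoff ρ p = 0 := by
  obtain ⟨j, hj | hj⟩ := hp <;>
  exact Finset.prod_eq_zero (Finset.mem_univ j) (by simp [hj])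

theorem cutoff_eq_one {ρ : ℝ} (hρ : 0 < ρ) {p : N → I}
    (hp : (fun j => (p j : ℝ)) ∈ innerBox N ρ) : cutoff ρ p = 1 :=
  Finset.prod_eq_one fun j _ => min_eq_left <| (one_le_div hρ).2 <|
    le_min (hp j trivial).1.le (by linarith [(hp j trivial).2])

end Cube

section Bump

variable {N : Type*} [Fintype N]

def boxBump (ρ : ℝ) (y : N → ℝ) : ℝ :=
  ∏ j, expNegInvGlue (y j - ρ) * expNegInvGlue (1 - ρ - y j)

theorem contDiff_boxBump (ρ : ℝ) : ContDiff ℝ 1 (boxBump (N := N) ρ) :=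
  contDiff_prod fun j _ =>
    (expNegInvGlue.contDiff.comp ((contDiff_apply ℝ ℝ j).sub contDiff_const)).mul
      (expNegInvGlue.contDiff.comp (contDiff_const.sub (contDiff_apply ℝ ℝ j)))

theorem boxBump_ne_zero {ρ : ℝ} {y : N → ℝ} (hy : y ∈ Cube.innerBox N ρ) : boxBump ρ y ≠ 0 :=
  (Finset.prod_pos fun j _ => mul_pos (expNegInvGlue.pos_of_pos (sub_pos.2 (hy j trivial).1))
    (expNegInvGlue.pos_of_pos (by linarith [(hy j trivial).2]))).ne'

theorem boxBump_eq_zero {ρ : ℝ} {y : N → ℝ} (hy : y ∉ Cube.innerBox N ρ) : boxBump ρ y = 0 := by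
  obtain ⟨j, -, hj⟩ := not_forall₂.1 hy
  refine Finset.prod_eq_zero (Finset.mem_univ j) ?_
  rcases not_and_or.1 hj with hj | hj
  · rw [expNegInvGlue.zero_of_nonpos (by linarith [not_lt.1 hj]), zero_mul]
  · rw [expNegInvGlue.zero_of_nonpos (x := 1 - ρ - y j) (by linarith [not_lt.1 hj]), mul_zero]

end Bump

/-- Near the boundary the map is blended with a smooth approximation; inside, the smooth
approximation is translated by a generic vector scaled by a bump, which misses the subspaces. -/
theorem Cube.exists_continuous_eqOn_boundary_mapsTo {N ι κ : Type*} [Fintype N] [Fintype ι]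
    [Finite κ] (L : κ → Submodule ℝ (ι → ℝ))
    (hL : ∀ j, Fintype.card N + finrank ℝ (L j) < Fintype.card ι) {U : Set (ι → ℝ)}
    (hU : IsOpen U) (hLU : ∀ z ∉ U, ∃ j, z ∈ L j) {f : (N → I) → ι → ℝ} (hf : Continuous f)
    (hfU : ∀ p ∈ boundary N, f p ∈ U) :
    ∃ g : (N → I) → ι → ℝ, Continuous g ∧ (∀ p ∈ boundary N, g p = f p) ∧ ∀ p, g p ∈ U := by
  obtain ⟨δ, hδ, ρ, hρ, hcollar⟩ := exists_pos_collar_ball_subset hU hf hfU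
  let e : C(N → I, N → ℝ) := ⟨fun p j => p j, by fun_prop⟩
  obtain ⟨P, hP, hPf⟩ := exists_contDiff_comp_near (e := e)
    (fun p q h => funext fun j => Subtype.ext (congrFun h j)) hf hδ
  obtain ⟨w, hw⟩ := exists_forall_add_smul_notMem L
    (fun j => by simpa [finrank_fintype_fun_eq_card] using hL j)
    (convex_pi fun _ _ => convex_Ioo _ _) hP.contDiffOn (contDiff_boxBump ρ).contDiffOn
    fun y hy => boxBump_ne_zero hy
  refine ⟨fun p => (1 - cutoff ρ p) • f p + cutoff ρ p • P (e p) + boxBump ρ (e p) • w,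
    ?_, fun p hp => ?_, fun p => ?_⟩
  · have := (contDiff_boxBump (N := N) ρ).continuous
    have := hP.continuous
    have := continuous_cutoff (N := N) ρ
    fun_prop
  · simp [cutoff_eq_zero hp, show boxBump ρ (e p) = 0 from
      boxBump_eq_zero (notMem_innerBox_of_mem_boundary hρ hp)]
  · beta_reduce
    by_cases hbox : e p ∈ innerBox N ρ
    · rw [cutoff_eq_one hρ hbox]
      by_contra hnot
      obtain ⟨j, hj⟩ := hLU _ hnot
      exact hw _ hbox j (by simpa using hj)
    · rw [boxBump_eq_zero hbox, zero_smul, add_zero]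
      refine hcollar p hbox (Metric.mem_ball.2 ?_)
      rw [dist_eq_norm, show (1 - cutoff ρ p) • f p + cutoff ρ p • P (e p) - f p
        = cutoff ρ p • (P (e p) - f p) by module, norm_smul,
        Real.norm_of_nonneg (cutoff_mem_Icc hρ p).1, ← dist_eq_norm]
      exact (mul_le_of_le_one_left dist_nonneg (cutoff_mem_Icc hρ p).2).trans_lt (hPf p)

def constOn {V : Type*} (τ : Finset V) : Submodule ℝ (V → ℝ) where
  carrier := {f | ∀ u ∈ τ, ∀ v ∈ τ, f u = f v}
  add_mem' hf hg u hu v hv := by simp [hf u hu v hv, hg u hu v hv]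
  zero_mem' _ _ _ _ := rfl
  smul_mem' c f hf u hu v hv := by simp [hf u hu v hv]

/-- `(c, u) ↦` the function equal to `c` on `τ` and to `u` off `τ`. -/
def extendConst {V : Type*} [DecidableEq V] (τ : Finset V) : (ℝ × ({v // v ∉ τ} → ℝ)) →ₗ[ℝ] V → ℝ :=
  LinearMap.pi fun v =>
    if h : v ∈ τ then LinearMap.fst ℝ _ _ else (LinearMap.proj ⟨v, h⟩).comp (LinearMap.snd ℝ _ _)

theorem constOn_le_range_extendConst {V : Type*} [DecidableEq V] (τ : Finset V) :
    constOn τ ≤ LinearMap.range (extendConst τ) := by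
  intro f hf
  obtain rfl | ⟨u, hu⟩ := τ.eq_empty_or_nonempty
  · exact ⟨(0, fun v => f v), funext fun v => by simp [extendConst]⟩
  · refine ⟨(f u, fun v => f v), funext fun v => ?_⟩
    by_cases hv : v ∈ τ
    · simp [extendConst, hv, hf u hu v hv]
    · simp [extendConst, hv]

theorem finrank_constOn_le {V : Type*} [Fintype V] [DecidableEq V] (τ : Finset V) :
    finrank ℝ (constOn τ) ≤ Fintype.card V - τ.card + 1 :=
  calc finrank ℝ (constOn τ) ≤ finrank ℝ (LinearMap.range (extendConst τ)) :=
        Submodule.finrank_mono (constOn_le_range_extendConst τ)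
    _ ≤ finrank ℝ (ℝ × ({v // v ∉ τ} → ℝ)) := LinearMap.finrank_range_le _
    _ = Fintype.card V - τ.card + 1 := by
        simp [finrank_prod, Fintype.card_subtype_compl, add_comm]

namespace Cplx

variable {V : Type} [Fintype V] (K : Cplx V)

open Classical in
def carrier : Set (V → ℝ) :=
  {f | (∑ v, f v = 1) ∧ (∀ v, 0 ≤ f v) ∧ K.faces (Finset.univ.filter fun v => f v ≠ 0)}

open Classical in
/-- Only nonempty sets, so that the minimum of a function over a non-face is defined. -/
def nonfaces : Finset {τ : Finset V // τ.Nonempty} := {τ | ¬ K.faces τ}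

variable {K}

theorem mem_nonfaces {τ : {τ : Finset V // τ.Nonempty}} : τ ∈ K.nonfaces ↔ ¬ K.faces τ := by
  simp [nonfaces]

section Retraction

variable (hK : K.nonfaces.Nonempty)

variable (K) in
/-- Largest `t` such that some non-face lies in `{v | t ≤ f v}`; then `{v | t < f v}` is a face. -/
def threshold (f : V → ℝ) : ℝ := K.nonfaces.sup' hK fun τ => τ.1.inf' τ.2 f

variable (K) in
def excess (f : V → ℝ) : V → ℝ := fun v => max (f v - K.threshold hK f) 0

variable (K) in
def retraction (f : V → ℝ) : V → ℝ := (∑ v, K.excess hK f v)⁻¹ • K.excess hK f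

theorem continuous_threshold : Continuous (K.threshold hK) :=
  Continuous.finset_sup'_apply hK fun τ _ =>
    Continuous.finset_inf'_apply τ.2 fun v _ => continuous_apply v

theorem continuous_excess : Continuous (K.excess hK) :=
  continuous_pi fun v => ((continuous_apply v).sub (continuous_threshold hK)).max continuous_const

theorem isOpen_sum_excess_pos : IsOpen {f : V → ℝ | 0 < ∑ v, K.excess hK f v} :=
  isOpen_lt continuous_const
    (continuous_finsetSum _ fun v _ => (continuous_apply v).comp (continuous_excess hK))

theorem continuousOn_retraction :
    ContinuousOn (K.retraction hK) {f | 0 < ∑ v, K.excess hK f v} := by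
  have hsum : Continuous fun f => ∑ v, K.excess hK f v :=
    continuous_finsetSum _ fun v _ => (continuous_apply v).comp (continuous_excess hK)
  exact (hsum.continuousOn.inv₀ fun f hf => hf.ne').smul (continuous_excess hK).continuousOn

theorem threshold_eq_zero {f : V → ℝ} (hf : f ∈ K.carrier) : K.threshold hK f = 0 := by
  classical
  obtain ⟨-, hnonneg, hface⟩ := hf
  refine le_antisymm (Finset.sup'_le _ _ fun τ hτ => ?_) ?_
  · obtain ⟨v, hvτ, hv⟩ : ∃ v ∈ τ.1, f v = 0 := by
      by_contra! h
      exact mem_nonfaces.1 hτ (K.down_closed (fun v hv => by simpa using h v hv) hface)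
    exact Finset.inf'_le_of_le _ hvτ hv.le
  · obtain ⟨τ, hτ⟩ := hK
    exact (Finset.le_inf' _ _ fun v _ => hnonneg v).trans
      (Finset.le_sup' (fun τ : {τ : Finset V // τ.Nonempty} => τ.1.inf' τ.2 f) hτ)

theorem excess_eq_self {f : V → ℝ} (hf : f ∈ K.carrier) : K.excess hK f = f := by
  funext v
  simp [excess, threshold_eq_zero hK hf, hf.2.1 v]

theorem retraction_eq_self {f : V → ℝ} (hf : f ∈ K.carrier) : K.retraction hK f = f := by
  simp [retraction, excess_eq_self hK hf, hf.1]

theorem sum_excess_pos {f : V → ℝ} (hf : f ∈ K.carrier) : 0 < ∑ v, K.excess hK f v := by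
  simp [excess_eq_self hK hf, hf.1]

theorem retraction_mem_carrier {f : V → ℝ} (hf : 0 < ∑ v, K.excess hK f v) :
    K.retraction hK f ∈ K.carrier := by
  classical
  have hsupp : (Finset.univ.filter fun v => K.retraction hK f v ≠ 0) =
      Finset.univ.filter fun v => K.threshold hK f < f v := by
    ext v
    have hsum : ∑ v, K.excess hK f v ≠ 0 := hf.ne'
    simp only [retraction, Pi.smul_apply, smul_eq_mul, ne_eq, mul_eq_zero, inv_eq_zero, hsum,
      false_or, Finset.mem_filter, Finset.mem_univ, true_and]
    simp [excess]
  refine ⟨?_, fun v => ?_, ?_⟩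
  · simp [retraction, ← Finset.mul_sum, hf.ne']
  · exact mul_nonneg (inv_nonneg.2 hf.le) (le_max_right _ _)
  · rw [hsupp]
    by_contra hnot
    set s := Finset.univ.filter fun v => K.threshold hK f < f v
    have hs : s.Nonempty := by
      refine Finset.nonempty_iff_ne_empty.2 fun hs => hf.ne' (Finset.sum_eq_zero fun v _ => ?_)
      have : f v ≤ K.threshold hK f := by simpa [s] using Finset.ext_iff.1 hs v
      simp [excess, this]
    obtain ⟨v, hvs, hv⟩ := Finset.exists_mem_eq_inf' hs f
    have := Finset.le_sup' (fun τ : {τ : Finset V // τ.Nonempty} => τ.1.inf' τ.2 f)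
      (mem_nonfaces.2 hnot : ⟨s, hs⟩ ∈ K.nonfaces)
    simp only [hv] at this
    exact (Finset.mem_filter.1 hvs).2.not_ge this

theorem exists_mem_constOn_of_sum_excess_eq_zero {f : V → ℝ}
    (hf : ∑ v, K.excess hK f v = 0) : ∃ τ : Finset V, ¬ K.faces τ ∧ f ∈ constOn τ := by
  have hle (v : V) : f v ≤ K.threshold hK f := by
    have := (Finset.sum_eq_zero_iff_of_nonneg fun v _ => le_max_right _ _).1 hf v
      (Finset.mem_univ v)
    simpa [excess] using this
  obtain ⟨τ, hτ, hval⟩ := Finset.exists_mem_eq_sup' hK fun τ => τ.1.inf' τ.2 f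
  have heq (v : V) (hv : v ∈ τ.1) : f v = K.threshold hK f :=
    le_antisymm (hle v) (hval.trans_le (Finset.inf'_le f hv))
  exact ⟨τ, mem_nonfaces.1 hτ, fun u hu v hv => (heq u hu).trans (heq v hv).symm⟩

end Retraction

theorem exists_continuous_eqOn_boundary {N : Type*} [Fintype N] {k : ℕ}
    (hk : ∀ s : Finset V, s.card ≤ k → K.faces s) (hK : K.nonfaces.Nonempty)
    (hN : Fintype.card N < k) {f : (N → I) → V → ℝ} (hf : Continuous f)
    (hfK : ∀ p ∈ Cube.boundary N, f p ∈ K.carrier) :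
    ∃ g : (N → I) → K.space, Continuous g ∧ ∀ p ∈ Cube.boundary N, (g p).1 = f p := by
  classical
  have hdim (τ : {τ : Finset V // ¬ K.faces τ}) :
      Fintype.card N + finrank ℝ (constOn τ.1) < Fintype.card V := by
    have := finrank_constOn_le τ.1
    have := Finset.card_le_univ τ.1
    have : k < τ.1.card := not_le.1 fun h => τ.2 (hk _ h)
    omega
  obtain ⟨g, hg, hg_bdry, hgU⟩ := Cube.exists_continuous_eqOn_boundary_mapsTo
    (fun τ : {τ : Finset V // ¬ K.faces τ} => constOn τ.1) hdim (isOpen_sum_excess_pos hK)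
    (fun z hz => by
      obtain ⟨τ, hτ, hzτ⟩ := exists_mem_constOn_of_sum_excess_eq_zero hK
        (le_antisymm (not_lt.1 hz) (Finset.sum_nonneg fun v _ => le_max_right _ _))
      exact ⟨⟨τ, hτ⟩, hzτ⟩)
    hf fun p hp => sum_excess_pos hK (hfK p hp)
  refine ⟨fun p => ⟨K.retraction hK (g p), retraction_mem_carrier hK (hgU p)⟩,
    ((continuousOn_retraction hK).comp_continuous hg hgU).subtype_mk _, fun p hp => ?_⟩
  simp [hg_bdry p hp, retraction_eq_self hK (hfK p hp)]

theorem genLoop_homotopic_const {k i : ℕ} (hk : ∀ s : Finset V, s.card ≤ k → K.faces s)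
    (hK : K.nonfaces.Nonempty) (hi : i + 2 ≤ k) {x : K.space}
    (γ : GenLoop (Fin i) K.space x) : GenLoop.Homotopic γ GenLoop.const := by
  let cone (p : Fin (i + 1) → I) : V → ℝ := (1 - (p 0 : ℝ)) • (γ (Fin.tail p)).1 + (p 0 : ℝ) • x.1
  have hγ_bdry {s : Fin i → I} (hs : s ∈ Cube.boundary (Fin i)) : γ s = x := γ.2 s hs
  have hcone_bdry (p) (hp : p ∈ Cube.boundary (Fin (i + 1))) : cone p ∈ K.carrier := by
    obtain ⟨j, hj⟩ := hp
    cases j using Fin.cases with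
    | zero =>
      rcases hj with hj | hj
      · rw [show cone p = (γ (Fin.tail p)).1 by simp [cone, hj]]
        exact (γ _).2
      · rw [show cone p = x.1 by simp [cone, hj]]
        exact x.2
    | succ j =>
      rw [show cone p = x.1 by simp [cone, hγ_bdry (s := Fin.tail p) ⟨j, hj⟩, ← add_smul]]
      exact x.2
  obtain ⟨g, hg, hg_bdry⟩ := exists_continuous_eqOn_boundary hk hK (by simp; omega)
    (by fun_prop : Continuous cone) hcone_bdry
  refine ⟨{ toFun := fun q => g (Fin.cons q.1 q.2)
            continuous_toFun := by fun_prop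
            map_zero_left := fun s => ?_
            map_one_left := fun s => ?_
            prop' := fun t s hs => ?_ }⟩
  · exact Subtype.ext ((hg_bdry (Fin.cons 0 s) ⟨0, Or.inl rfl⟩).trans (by simp [cone]))
  · exact Subtype.ext ((hg_bdry (Fin.cons 1 s) ⟨0, Or.inr rfl⟩).trans (by simp [cone]))
  · obtain ⟨j, hj⟩ := hs
    refine Subtype.ext ((hg_bdry (Fin.cons t s) ⟨j.succ, by simpa using hj⟩).trans ?_)
    simp [cone, hγ_bdry ⟨j, hj⟩, ← add_smul]

theorem subsingleton_homotopyGroup {k i : ℕ} (hk : ∀ s : Finset V, s.card ≤ k → K.faces s)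
    (hK : K.nonfaces.Nonempty) (hi : i + 2 ≤ k) (x : K.space) :
    Subsingleton (HomotopyGroup (Fin i) K.space x) :=
  ⟨fun a b => Quotient.inductionOn₂ a b fun γ γ' => Quotient.sound <|
    (genLoop_homotopic_const hk hK hi γ).trans (genLoop_homotopic_const hk hK hi γ').symm⟩

end Cplx

theorem domCpx_faces_of_card_le {V : Type} [Fintype V] [DecidableEq V] (G : SimpleGraph V)
    [DecidableRel G.Adj] {s : Finset V} (hs : s.card ≤ G.minDegree) : (domCpx G).faces s := by
  intro v
  have hcard : s.card < (insert v (G.neighborFinset v)).card := by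
    rw [Finset.card_insert_of_notMem (by simp), card_neighborFinset_eq_degree]
    linarith [G.minDegree_le_degree v]
  obtain ⟨w, hw, hws⟩ := Finset.exists_mem_notMem_of_card_lt_card hcard
  refine ⟨w, hws, ?_⟩
  rcases Finset.mem_insert.1 hw with rfl | hw
  · exact Or.inl rfl
  · exact Or.inr ((mem_neighborFinset G v w).1 hw).symm

theorem domCpx_nonfaces_nonempty {V : Type} [Fintype V] [DecidableEq V] [Nonempty V]
    (G : SimpleGraph V) : (domCpx G).nonfaces.Nonempty := by
  refine ⟨⟨Finset.univ, Finset.univ_nonempty⟩, Cplx.mem_nonfaces.2 fun h => ?_⟩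
  obtain ⟨w, hw, -⟩ := h (Classical.arbitrary V)
  exact hw (Finset.mem_univ w)

end

/-- Proposition 5.10: if `k` is the minimum degree of `G`, then the dominance complex
of `G` is `(k-2)`-connected, i.e. `π_i(D(G))` is trivial for all `0 ≤ i ≤ k - 2`. -/
theorem dominance_connected_of_minDegree {V : Type} [Fintype V] [DecidableEq V]
    (G : SimpleGraph V) [DecidableRel G.Adj] (k : ℕ) (hk : G.minDegree = k) :
    ∀ (x : (domCpx G).space) (i : ℕ), (i : ℤ) ≤ (k : ℤ) - 2 →
      Subsingleton (HomotopyGroup (Fin i) (domCpx G).space x) := by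
  intro x i hi
  have : Nonempty V :=
    Finset.univ_nonempty_iff.1 (Finset.nonempty_of_sum_ne_zero (x.2.1.trans_ne one_ne_zero))
  exact (domCpx G).subsingleton_homotopyGroup (fun s hs => domCpx_faces_of_card_le G (hk ▸ hs))
    (domCpx_nonfaces_nonempty G) (by omega) x
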